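/- arXiv:2006.01483 — 5 statements merged into one kernel-verified Lean document; each statement's English description precedes it below -/
import Mathlib

section
/- Let R : A → A be a Rota-Baxter operator of weight 0 on an associative algebra A, i.e., R(a)R(b) = R(R(a)b + aR(b)) for all a, b. Then the operations a ≺ b := a R(b) and a ≻ b := R(a) b make A into a dendriform algebra. -/
section RotaBaxter

variable {A : Type*} [NonUnitalSemiring A] {R : A → A}

theorem rotaBaxter_mul_mul_right (hR : ∀ a b : A, R a * R b = R (R a * b + a * R b))
    (a b c : A) : a * R b * R c = a * R (b * R c + R b * c) := by
  rw [mul_assoc, hR b c, add_comm]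

theorem rotaBaxter_mul_mul_left (hR : ∀ a b : A, R a * R b = R (R a * b + a * R b))
    (a b c : A) : R (a * R b + R a * b) * c = R a * (R b * c) := by
  rw [add_comm, ← hR, mul_assoc]

end RotaBaxter

/-- A Rota-Baxter operator of weight `0` on an associative algebra induces a dendriform
algebra structure `a ≺ b = a R(b)`, `a ≻ b = R(a) b`. -/
theorem rotaBaxter_weight_zero_dendriform {K A : Type*} [Field K] [Ring A] [Algebra K A]
    (R : A →ₗ[K] A)
    (hR : ∀ a b : A, R a * R b = R (R a * b + a * R b)) :
    (∀ a b c : A, (a * R b) * R c = a * R (b * R c + R b * c)) ∧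
    (∀ a b c : A, (R a * b) * R c = R a * (b * R c)) ∧
    (∀ a b c : A, R (a * R b + R a * b) * c = R a * (R b * c)) :=
  ⟨rotaBaxter_mul_mul_right hR, fun _ _ _ => mul_assoc _ _ _, rotaBaxter_mul_mul_left hR⟩
end

section
/- Let R be a Rota-Baxter operator of weight λ on an associative algebra A. Then the operations a ≺ b := aR(b), a ≻ b := R(a)b, and a · b := λab make A into a tridendriform algebra. -/
/-! Only the axioms for `(a ≺ b) ≺ c` and `(a ≺ b + a ≻ b + a · b) ≻ c` involve the Rota-Baxter
identity; the other five are associativity of `A` and the compatibility of its product with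
scalars. -/

def IsRotaBaxter {K A : Type*} [CommSemiring K] [Semiring A] [Algebra K A]
    (l : K) (R : A →ₗ[K] A) : Prop :=
  ∀ a b : A, R a * R b = R (R a * b + a * R b + l • (a * b))

namespace IsRotaBaxter

variable {K A : Type*} [CommSemiring K] [Semiring A] [Algebra K A] {l : K} {R : A →ₗ[K] A}

theorem mul_mul_apply (hR : IsRotaBaxter l R) (a b c : A) :
    (a * R b) * R c = a * R (b * R c + R b * c + l • (b * c)) := by
  rw [mul_assoc, hR, add_comm (R b * c)]

theorem apply_mul_mul (hR : IsRotaBaxter l R) (a b c : A) :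
    R (a * R b + R a * b + l • (a * b)) * c = R a * (R b * c) := by
  rw [add_comm (a * R b), ← hR, mul_assoc]

end IsRotaBaxter

/-- A Rota-Baxter operator of weight `λ` on an associative algebra `A` induces a
tridendriform algebra structure `a ≺ b = aR(b)`, `a ≻ b = R(a)b`, `a · b = λab`. -/
theorem rotaBaxter_tridendriform {K A : Type*} [Field K] [Ring A] [Algebra K A]
    (l : K) (R : A →ₗ[K] A)
    (hR : ∀ a b : A, R a * R b = R (R a * b + a * R b + l • (a * b))) :
    (∀ a b c : A, (a * R b) * R c = a * R (b * R c + R b * c + l • (b * c))) ∧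
    (∀ a b c : A, (R a * b) * R c = R a * (b * R c)) ∧
    (∀ a b c : A, R (a * R b + R a * b + l • (a * b)) * c = R a * (R b * c)) ∧
    (∀ a b c : A, l • ((R a * b) * c) = R a * (l • (b * c))) ∧
    (∀ a b c : A, l • ((a * R b) * c) = l • (a * (R b * c))) ∧
    (∀ a b c : A, (l • (a * b)) * R c = l • (a * (b * R c))) ∧
    (∀ a b c : A, l • ((l • (a * b)) * c) = l • (a * (l • (b * c)))) := by
  refine ⟨IsRotaBaxter.mul_mul_apply hR, fun a b c => mul_assoc _ _ _,
    IsRotaBaxter.apply_mul_mul hR, fun a b c => ?_, fun a b c => by rw [mul_assoc],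
    fun a b c => ?_, fun a b c => ?_⟩
  · rw [mul_smul_comm, mul_assoc]
  · rw [smul_mul_assoc, mul_assoc]
  · rw [smul_mul_assoc, mul_smul_comm, mul_assoc]
end

section
/- If (D, ≺, ≻, ·) is a tridendriform algebra, then (D, ≺', ≻) with a ≺' b := a ≺ b + a · b is a dendriform algebra. -/
/-!
With `p`, `s`, `d` standing for `≺`, `≻`, `·`, expand `≺' = ≺ + ·` bilinearly: the first
dendriform axiom for `(≺', ≻)` is then the sum of the four tridendriform axioms with `≺` or `·`
in both positions, the second is the sum of the two axioms starting with `a ≻ b`, and the third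
is the tridendriform axiom for `≻` itself.
-/

section

variable {R D : Type*} [CommSemiring R] [AddCommMonoid D] [Module R D]

structure IsDendriform (l r : D →ₗ[R] D →ₗ[R] D) : Prop where
  left_left : ∀ a b c, l (l a b) c = l a (l b c + r b c)
  right_left : ∀ a b c, l (r a b) c = r a (l b c)
  right_right : ∀ a b c, r (l a b + r a b) c = r a (r b c)

structure IsTridendriform (p s d : D →ₗ[R] D →ₗ[R] D) : Prop where
  left_left : ∀ a b c, p (p a b) c = p a (p b c + s b c + d b c)
  right_left : ∀ a b c, p (s a b) c = s a (p b c)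
  right_right : ∀ a b c, s (p a b + s a b + d a b) c = s a (s b c)
  right_dot : ∀ a b c, d (s a b) c = s a (d b c)
  left_dot : ∀ a b c, d (p a b) c = d a (s b c)
  dot_left : ∀ a b c, p (d a b) c = d a (p b c)
  dot_dot : ∀ a b c, d (d a b) c = d a (d b c)

namespace IsTridendriform

variable {p s d : D →ₗ[R] D →ₗ[R] D} (h : IsTridendriform p s d)
include h

theorem add_dot_left_left (a b c : D) :
    (p + d) ((p + d) a b) c = (p + d) a ((p + d) b c + s b c) := by
  calc (p + d) ((p + d) a b) c
      = p (p a b) c + (d (p a b) c + p (d a b) c + d (d a b) c) := by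
        simp only [LinearMap.add_apply, map_add]
        abel
    _ = p a (p b c + s b c + d b c) + d a (p b c + s b c + d b c) := by
        rw [h.left_left, h.left_dot, h.dot_left, h.dot_dot]
        simp only [map_add]
        abel
    _ = (p + d) a ((p + d) b c + s b c) := by
        simp only [LinearMap.add_apply]
        abel_nf

theorem add_dot_right_left (a b c : D) : (p + d) (s a b) c = s a ((p + d) b c) := by
  simp only [LinearMap.add_apply, map_add, h.right_left, h.right_dot]

theorem add_dot_right_right (a b c : D) :
    s ((p + d) a b + s a b) c = s a (s b c) := by
  rw [← h.right_right, LinearMap.add_apply, LinearMap.add_apply, add_right_comm]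

theorem isDendriform_add_dot : IsDendriform (p + d) s :=
  ⟨h.add_dot_left_left, h.add_dot_right_left, h.add_dot_right_right⟩

end IsTridendriform

end

/-- If `(D, ≺, ≻, ·)` is a tridendriform algebra, then `(D, ≺ + ·, ≻)` is a
dendriform algebra. -/
theorem tridendriform_to_dendriform {K D : Type*} [Field K] [AddCommGroup D] [Module K D]
    (p s d : D →ₗ[K] D →ₗ[K] D)
    (h1 : ∀ a b c : D, p (p a b) c = p a (p b c + s b c + d b c))
    (h2 : ∀ a b c : D, p (s a b) c = s a (p b c))
    (h3 : ∀ a b c : D, s (p a b + s a b + d a b) c = s a (s b c))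
    (h4 : ∀ a b c : D, d (s a b) c = s a (d b c))
    (h5 : ∀ a b c : D, d (p a b) c = d a (s b c))
    (h6 : ∀ a b c : D, p (d a b) c = d a (p b c))
    (h7 : ∀ a b c : D, d (d a b) c = d a (d b c)) :
    (∀ a b c : D,
      (p (p a b + d a b) c + d (p a b + d a b) c) =
        (p a ((p b c + d b c) + s b c) + d a ((p b c + d b c) + s b c))) ∧
    (∀ a b c : D, (p (s a b) c + d (s a b) c) = s a (p b c + d b c)) ∧
    (∀ a b c : D, s ((p a b + d a b) + s a b) c = s a (s b c)) := by
  have hD := (IsTridendriform.mk h1 h2 h3 h4 h5 h6 h7).isDendriform_add_dot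
  exact ⟨hD.left_left, hD.right_left, hD.right_right⟩
end

section
/- Let A be an involutive associative algebra with involution * and M an involutive A-bimodule. For n ≥ 1 define iC^n(A, M) = { f : A^⊗n → M | f(a₁,…,aₙ)* = (−1)^{(n−1)(n−2)/2} f(aₙ*,…,a₁*) }. Then the Hochschild coboundary δ maps iC^n(A, M) into iC^{n+1}(A, M), i.e., the involutive cochains form a subcomplex of the Hochschild complex. -/
/-- The Hochschild coboundary of a cochain `f : A^⊗n → M`, where the left and right
`A`-actions on `M` are given by `al` and `ar`. -/
def hochschildDelta {K A M : Type*} [Field K] [Ring A] [Algebra K A]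
    [AddCommGroup M] [Module K M]
    (al : A →ₗ[K] M →ₗ[K] M) (ar : M →ₗ[K] A →ₗ[K] M) (n : ℕ)
    (f : (Fin n → A) → M) : (Fin (n + 1) → A) → M :=
  fun a =>
    al (a 0) (f (Fin.tail a))
      + (Finset.univ.sum fun i : Fin n =>
          ((-1 : ℤ) ^ (i.1 + 1)) •
            f (fun j : Fin n =>
              if j.1 < i.1 then a j.castSucc
              else if j.1 = i.1 then a j.castSucc * a j.succ
              else a j.succ))
      + ((-1 : ℤ) ^ (n + 1)) • ar (f (Fin.init a)) (a (Fin.last n))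

/-!
Write `b = (aₙ*, …, a₀*)` for the reversed, starred tuple. Since `(aᵢ aᵢ₊₁)* = aᵢ₊₁* aᵢ*`, the
face of `δ f` contracting `aᵢ aᵢ₊₁` is carried by `*` to the face of `b` contracting position
`n - 1 - i`, and since `*` on `M` swaps the two actions, the outer faces `a₀ · f(…)` and
`f(…) · aₙ` are exchanged. So `(δ f)(a)* = (-1)^(n+1) (δ g)(b)` whenever `f(x)* = g(xₙ*, …, x₁*)`.
For an involutive cochain `g = (-1)^((n-1)(n-2)/2) f`, and the triangle-number recursion gives
`(n + 1) + (n-1)(n-2)/2 ≡ n(n-1)/2 (mod 2)`.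
-/

namespace Fin

variable {α : Type*} {n : ℕ}

theorem tail_comp_rev (g : Fin (n + 1) → α) : tail (g ∘ rev) = init g ∘ rev := by
  funext i
  simp [tail, init, rev_succ]

theorem init_comp_rev (g : Fin (n + 1) → α) : init (g ∘ rev) = tail g ∘ rev := by
  funext i
  simp [tail, init, rev_castSucc]

theorem contractNth_comp_rev (op : α → α → α) (g : Fin (n + 1) → α) (i : Fin n) :
    contractNth i.castSucc op g ∘ rev = contractNth i.rev.castSucc (flip op) (g ∘ rev) := by
  funext k
  have hk : (k.rev : ℕ) = n - (k + 1) := val_rev k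
  have hi : (i.rev : ℕ) = n - (i + 1) := val_rev i
  have := k.isLt
  have := i.isLt
  simp only [Function.comp_apply]
  rcases lt_trichotomy (k : ℕ) i.rev with h | h | h
  · rw [contractNth_apply_of_gt _ _ _ _ (by simp; omega), contractNth_apply_of_lt _ _ _ _ h,
      Function.comp_apply, rev_castSucc]
  · rw [contractNth_apply_of_eq _ _ _ _ (by simp; omega), contractNth_apply_of_eq _ _ _ _ h,
      Function.comp_apply, Function.comp_apply, rev_castSucc, rev_succ]
    rfl
  · rw [contractNth_apply_of_lt _ _ _ _ (by simp; omega), contractNth_apply_of_gt _ _ _ _ h,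
      Function.comp_apply, rev_succ]

theorem neg_one_pow_val_rev_add_one (i : Fin n) :
    (-1 : ℤ) ^ (i.rev.1 + 1) = (-1) ^ (n + 1) * (-1) ^ (i.1 + 1) := by
  have : n + 1 + (i.1 + 1) = i.rev.1 + 1 + 2 * (i.1 + 1) := by
    rw [val_rev]; omega
  rw [← pow_add, this, pow_add _ _ (2 * _), pow_mul]
  simp

end Fin

theorem neg_one_pow_triangle_succ {n : ℕ} (hn : 1 ≤ n) :
    (-1 : ℤ) ^ (n + 1) * (-1) ^ ((n - 1) * (n - 2) / 2) = (-1) ^ (n * (n - 1) / 2) := by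
  obtain ⟨m, rfl⟩ := Nat.exists_eq_add_of_le' hn
  rw [Nat.triangle_succ, show m + 1 - 1 = m by omega, show m + 1 - 2 = m - 1 by omega]
  ring

section

variable {K A M : Type*} [Field K] [Ring A] [Algebra K A] [AddCommGroup M] [Module K M]
  (al : A →ₗ[K] M →ₗ[K] M) (ar : M →ₗ[K] A →ₗ[K] M) {n : ℕ}

theorem hochschildDelta_eq_contractNth (f : (Fin n → A) → M) (a : Fin (n + 1) → A) :
    hochschildDelta al ar n f a = al (a 0) (f (Fin.tail a))
      + ∑ i : Fin n, (-1 : ℤ) ^ (i.1 + 1) • f (Fin.contractNth i.castSucc (· * ·) a)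
      + (-1 : ℤ) ^ (n + 1) • ar (f (Fin.init a)) (a (Fin.last n)) :=
  rfl

theorem hochschildDelta_zsmul (z : ℤ) (f : (Fin n → A) → M) (a : Fin (n + 1) → A) :
    hochschildDelta al ar n (fun x => z • f x) a = z • hochschildDelta al ar n f a := by
  simp only [hochschildDelta_eq_contractNth, map_zsmul, LinearMap.smul_apply, smul_add,
    Finset.smul_sum, smul_comm z]

variable {F : Type*} [FunLike F M M] [AddMonoidHomClass F M M]

theorem map_hochschildDelta_of_map_eq (σ : A → A) (τ : F)
    (hσ : ∀ x y, σ (x * y) = σ y * σ x)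
    (hl : ∀ x m, τ (al x m) = ar (τ m) (σ x)) (hr : ∀ m x, τ (ar m x) = al (σ x) (τ m))
    (f g : (Fin n → A) → M) (hfg : ∀ x, τ (f x) = g (σ ∘ x ∘ Fin.rev))
    (a : Fin (n + 1) → A) :
    τ (hochschildDelta al ar n f a) =
      (-1 : ℤ) ^ (n + 1) • hochschildDelta al ar n g (σ ∘ a ∘ Fin.rev) := by
  set b := σ ∘ a ∘ Fin.rev
  have h_tail : σ ∘ Fin.tail a ∘ Fin.rev = Fin.init b := by
    rw [← Fin.init_comp_rev, Fin.comp_init]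
  have h_init : σ ∘ Fin.init a ∘ Fin.rev = Fin.tail b := by
    rw [← Fin.tail_comp_rev, Fin.comp_tail]
  have h_contract (i : Fin n) :
      σ ∘ Fin.contractNth i.castSucc (· * ·) a ∘ Fin.rev =
        Fin.contractNth i.rev.castSucc (· * ·) b := by
    rw [Fin.contractNth_comp_rev]
    exact Fin.comp_contractNth _ _ (fun x y => hσ y x) _ _
  have h_sum : ∑ i : Fin n, (-1 : ℤ) ^ (i.1 + 1) • g (Fin.contractNth i.rev.castSucc (· * ·) b)
      = ∑ i : Fin n,
          ((-1 : ℤ) ^ (n + 1) * (-1) ^ (i.1 + 1)) • g (Fin.contractNth i.castSucc (· * ·) b) := by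
    rw [← Equiv.sum_comp Fin.revPerm]
    simp only [Fin.revPerm_apply, Fin.rev_rev, Fin.neg_one_pow_val_rev_add_one]
  have h_sq : (-1 : ℤ) ^ (n + 1) * (-1) ^ (n + 1) = 1 := by
    rw [← mul_pow]; norm_num
  have h_first : b (Fin.last n) = σ (a 0) := congrArg (σ ∘ a) (Fin.rev_last n)
  have h_last : b 0 = σ (a (Fin.last n)) := congrArg (σ ∘ a) (Fin.rev_zero n)
  simp only [hochschildDelta_eq_contractNth, map_add, map_sum, map_zsmul, hl, hr, hfg, h_tail,
    h_init, h_contract, h_sum, h_first, h_last, smul_add, Finset.smul_sum, smul_smul, h_sq,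
    one_smul]
  abel

end

theorem hochschildDelta_involutive_general
    {K A M : Type*} [Field K] [Ring A] [Algebra K A]
    [AddCommGroup M] [Module K M]
    (al : A →ₗ[K] M →ₗ[K] M) (ar : M →ₗ[K] A →ₗ[K] M)
    (invA : A →ₗ[K] A) (invM : M →ₗ[K] M)
    (hantiA : ∀ a b : A, invA (a * b) = invA b * invA a)
    (hal : ∀ (a : A) (m : M), invM (al a m) = ar (invM m) (invA a))
    (har : ∀ (m : M) (a : A), invM (ar m a) = al (invA a) (invM m))
    (n : ℕ) (hn : 1 ≤ n)
    (f : (Fin n → A) → M)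
    (hf : ∀ a : Fin n → A,
      invM (f a) = ((-1 : ℤ) ^ ((n - 1) * (n - 2) / 2)) •
        f (fun i => invA (a (Fin.rev i)))) :
    ∀ a : Fin (n + 1) → A,
      invM (hochschildDelta al ar n f a) =
        ((-1 : ℤ) ^ (n * (n - 1) / 2)) •
          hochschildDelta al ar n f (fun i => invA (a (Fin.rev i))) := by
  intro a
  rw [map_hochschildDelta_of_map_eq al ar invA invM hantiA hal har f (_ • f ·) hf,
    hochschildDelta_zsmul, smul_smul, neg_one_pow_triangle_succ hn]
  rfl

/-- For an involutive associative algebra `A` and an involutive `A`-bimodule `M`, the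
involutive cochains `iC^n(A,M) = { f | f(a₁,…,aₙ)* = (−1)^{(n−1)(n−2)/2} f(aₙ*,…,a₁*) }`
form a subcomplex of the Hochschild complex: the coboundary of an involutive `n`-cochain
is an involutive `(n+1)`-cochain. -/
theorem hochschildDelta_involutive
    {K A M : Type*} [Field K] [Ring A] [Algebra K A]
    [AddCommGroup M] [Module K M]
    (al : A →ₗ[K] M →ₗ[K] M) (ar : M →ₗ[K] A →ₗ[K] M)
    (hassoc : ∀ (a b : A) (m : M), al (a * b) m = al a (al b m))
    (hassoc' : ∀ (m : M) (a b : A), ar (ar m a) b = ar m (a * b))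
    (hmid : ∀ (a : A) (m : M) (b : A), ar (al a m) b = al a (ar m b))
    (invA : A →ₗ[K] A) (invM : M →ₗ[K] M)
    (hinvA : ∀ a : A, invA (invA a) = a)
    (hinvM : ∀ m : M, invM (invM m) = m)
    (hantiA : ∀ a b : A, invA (a * b) = invA b * invA a)
    (hal : ∀ (a : A) (m : M), invM (al a m) = ar (invM m) (invA a))
    (har : ∀ (m : M) (a : A), invM (ar m a) = al (invA a) (invM m))
    (n : ℕ) (hn : 1 ≤ n)
    (f : (Fin n → A) → M)
    (hf : ∀ a : Fin n → A,
      invM (f a) = ((-1 : ℤ) ^ ((n - 1) * (n - 2) / 2)) •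
        f (fun i => invA (a (Fin.rev i)))) :
    ∀ a : Fin (n + 1) → A,
      invM (hochschildDelta al ar n f a) =
        ((-1 : ℤ) ^ (n * (n - 1) / 2)) •
          hochschildDelta al ar n f (fun i => invA (a (Fin.rev i))) :=
  hochschildDelta_involutive_general al ar invA invM hantiA hal har n hn f hf
end

section
/- Let D be a dendriform algebra, M an abelian dendriform algebra (trivial products) that is a representation of D, and (α, β) data with β : {1,2} × D × D → M and α = 0 (the split case). If β satisfies the 2-cocycle conditions for the dendriform cohomology, then B = M ⊕ D with operations (m,a) ≺ (n,b) = (m ≺ b + a ≺ n + β(1;a,b), a ≺ b) and (m,a) ≻ (n,b) = (m ≻ b + a ≻ n + β(2;a,b), a ≻ b) is a dendriform algebra. -/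
/-!
The `D`-component of each dendriform identity on `M × D` is the same identity in `D`. Since `M`
multiplies trivially, the `M`-component splits into the three representation identities (with
the `M`-entry in the first, second or third slot) plus the cocycle identity collecting the
`β`-terms.
-/

namespace Dendriform

variable {R A M : Type*} [CommRing R] [AddCommGroup A] [Module R A] [AddCommGroup M] [Module R M]

def extMul (ρr : M →ₗ[R] A →ₗ[R] M) (ρl : A →ₗ[R] M →ₗ[R] M) (β : A →ₗ[R] A →ₗ[R] M)
    (μ : A →ₗ[R] A →ₗ[R] A) (x y : M × A) : M × A :=
  (ρr x.1 y.2 + ρl x.2 y.1 + β x.2 y.2, μ x.2 y.2)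

variable {p s : A →ₗ[R] A →ₗ[R] A} {pl sl : A →ₗ[R] M →ₗ[R] M} {pr sr : M →ₗ[R] A →ₗ[R] M}
  {β1 β2 : A →ₗ[R] A →ₗ[R] M}

theorem extMul_left_assoc
    (h1 : ∀ a b c : A, p (p a b) c = p a (p b c + s b c))
    (r1 : ∀ (m : M) (b c : A), pr (pr m b) c = pr m (p b c + s b c))
    (r2 : ∀ (a : A) (m : M) (c : A), pr (pl a m) c = pl a (pr m c + sr m c))
    (r3 : ∀ (a b : A) (m : M), pl (p a b) m = pl a (pl b m + sl b m))
    (c1 : ∀ a b c : A,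
      β1 (p a b) c + pr (β1 a b) c = pl a (β1 b c + β2 b c) + β1 a (p b c + s b c))
    (x y z : M × A) :
    extMul pr pl β1 p (extMul pr pl β1 p x y) z =
      extMul pr pl β1 p x (extMul pr pl β1 p y z + extMul sr sl β2 s y z) := by
  refine Prod.ext ?_ (h1 x.2 y.2 z.2)
  simp only [extMul, Prod.mk_add_mk]
  linear_combination (norm := (simp only [map_add, LinearMap.add_apply]; module))
    r1 x.1 y.2 z.2 + r2 x.2 y.1 z.2 + r3 x.2 y.2 z.1 + c1 x.2 y.2 z.2

theorem extMul_middle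
    (h2 : ∀ a b c : A, p (s a b) c = s a (p b c))
    (r4 : ∀ (m : M) (b c : A), pr (sr m b) c = sr m (p b c))
    (r5 : ∀ (a : A) (m : M) (c : A), pr (sl a m) c = sl a (pr m c))
    (r6 : ∀ (a b : A) (m : M), pl (s a b) m = sl a (pl b m))
    (c2 : ∀ a b c : A,
      β1 (s a b) c + pr (β2 a b) c = sl a (β1 b c) + β2 a (p b c))
    (x y z : M × A) :
    extMul pr pl β1 p (extMul sr sl β2 s x y) z =
      extMul sr sl β2 s x (extMul pr pl β1 p y z) := by
  refine Prod.ext ?_ (h2 x.2 y.2 z.2)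
  simp only [extMul]
  linear_combination (norm := (simp only [map_add, LinearMap.add_apply]; module))
    r4 x.1 y.2 z.2 + r5 x.2 y.1 z.2 + r6 x.2 y.2 z.1 + c2 x.2 y.2 z.2

theorem extMul_right_assoc
    (h3 : ∀ a b c : A, s (p a b + s a b) c = s a (s b c))
    (r7 : ∀ (m : M) (b c : A), sr (pr m b + sr m b) c = sr m (s b c))
    (r8 : ∀ (a : A) (m : M) (c : A), sr (pl a m + sl a m) c = sl a (sr m c))
    (r9 : ∀ (a b : A) (m : M), sl (p a b + s a b) m = sl a (sl b m))
    (c3 : ∀ a b c : A,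
      β2 (p a b + s a b) c + sr (β1 a b + β2 a b) c = sl a (β2 b c) + β2 a (s b c))
    (x y z : M × A) :
    extMul sr sl β2 s (extMul pr pl β1 p x y + extMul sr sl β2 s x y) z =
      extMul sr sl β2 s x (extMul sr sl β2 s y z) := by
  refine Prod.ext ?_ (h3 x.2 y.2 z.2)
  simp only [extMul, Prod.mk_add_mk]
  linear_combination (norm := (simp only [map_add, LinearMap.add_apply]; module))
    r7 x.1 y.2 z.2 + r8 x.2 y.1 z.2 + r9 x.2 y.2 z.1 + c3 x.2 y.2 z.2

end Dendriform

open Dendriform in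
/-- Given a dendriform algebra `D`, a representation `M` (viewed as an abelian dendriform
algebra), and a dendriform 2-cocycle `β = (β¹, β²)` (split case `α = 0`), the space
`B = M ⊕ D` with operations
`(m,a) ≺ (n,b) = (m ≺ b + a ≺ n + β¹(a,b), a ≺ b)` and
`(m,a) ≻ (n,b) = (m ≻ b + a ≻ n + β²(a,b), a ≻ b)` is a dendriform algebra. -/
theorem dendriform_extension_by_cocycle
    {K D M : Type*} [Field K] [AddCommGroup D] [Module K D]
    [AddCommGroup M] [Module K M]
    (p s : D →ₗ[K] D →ₗ[K] D)
    (h1 : ∀ a b c : D, p (p a b) c = p a (p b c + s b c))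
    (h2 : ∀ a b c : D, p (s a b) c = s a (p b c))
    (h3 : ∀ a b c : D, s (p a b + s a b) c = s a (s b c))
    -- action maps of the representation M
    (pl sl : D →ₗ[K] M →ₗ[K] M) (pr sr : M →ₗ[K] D →ₗ[K] M)
    -- the nine representation identities
    (r1 : ∀ (m : M) (b c : D), pr (pr m b) c = pr m (p b c + s b c))
    (r2 : ∀ (a : D) (m : M) (c : D), pr (pl a m) c = pl a (pr m c + sr m c))
    (r3 : ∀ (a b : D) (m : M), pl (p a b) m = pl a (pl b m + sl b m))
    (r4 : ∀ (m : M) (b c : D), pr (sr m b) c = sr m (p b c))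
    (r5 : ∀ (a : D) (m : M) (c : D), pr (sl a m) c = sl a (pr m c))
    (r6 : ∀ (a b : D) (m : M), pl (s a b) m = sl a (pl b m))
    (r7 : ∀ (m : M) (b c : D), sr (pr m b + sr m b) c = sr m (s b c))
    (r8 : ∀ (a : D) (m : M) (c : D), sr (pl a m + sl a m) c = sl a (sr m c))
    (r9 : ∀ (a b : D) (m : M), sl (p a b + s a b) m = sl a (sl b m))
    -- the 2-cocycle β = (β¹, β²)
    (β1 β2 : D →ₗ[K] D →ₗ[K] M)
    (c1 : ∀ a b c : D,
      β1 (p a b) c + pr (β1 a b) c = pl a (β1 b c + β2 b c) + β1 a (p b c + s b c))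
    (c2 : ∀ a b c : D,
      β1 (s a b) c + pr (β2 a b) c = sl a (β1 b c) + β2 a (p b c))
    (c3 : ∀ a b c : D,
      β2 (p a b + s a b) c + sr (β1 a b + β2 a b) c = sl a (β2 b c) + β2 a (s b c)) :
    ∀ P S : M × D → M × D → M × D,
      (P = fun x y => (pr x.1 y.2 + pl x.2 y.1 + β1 x.2 y.2, p x.2 y.2)) →
      (S = fun x y => (sr x.1 y.2 + sl x.2 y.1 + β2 x.2 y.2, s x.2 y.2)) →
      (∀ x y z : M × D, P (P x y) z = P x (P y z + S y z)) ∧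
      (∀ x y z : M × D, P (S x y) z = S x (P y z)) ∧
      (∀ x y z : M × D, S (P x y + S x y) z = S x (S y z)) := by
  rintro P S rfl rfl
  exact ⟨extMul_left_assoc h1 r1 r2 r3 c1, extMul_middle h2 r4 r5 r6 c2,
    extMul_right_assoc h3 r7 r8 r9 c3⟩
end
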